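/- arXiv:0811.0949 — 2 statements merged into one kernel-verified Lean document; each statement's English description precedes it below -/
import Mathlib

section
/- In model D₂^T, fix an orientation O of G with a legal walk from u (started forward) to some vertex of T, and let X(O) be the set of vertices x reachable from u both in forward-arrival and reverse-arrival mode. Let O^r be the orientation obtained by reversing all edges not having both endpoints in X(O). Then X(O^r) = X(O), (O^r)^r = O, and there is a legal walk from u (started forward) arriving at v forward in O if and only if there is a legal walk from u arriving at v in reverse in O^r. -/
open scoped Classical

noncomputable section

/-- Indicator of a proposition, as a real number. -/
def pInd (P : Prop) : ℝ := if P then 1 else 0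

variable {V : Type}

/-- Given an orientation `d` of the edges (the edge `e` points from `e.out.1` to
`e.out.2` when `d e = true`, and the other way when `d e = false`), `dirStep G d a b`
says that there is an edge of `G` directed from `a` to `b`. -/
def dirStep (G : SimpleGraph V) (d : Sym2 V → Bool) (a b : V) : Prop :=
  G.Adj a b ∧ ((s(a, b)).out = (a, b) ∧ d s(a, b) = true ∨
    (s(a, b)).out = (b, a) ∧ d s(a, b) = false)

/-- One step of a walk in model D₂^T on the state space `V × Bool`: the second
component records whether the last edge was traversed with (`true`) or against
(`false`) its orientation. The traversal mode may change only at vertices of `T`. -/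
def d2Step (G : SimpleGraph V) (d : Sym2 V → Bool) (T : Set V) :
    V × Bool → V × Bool → Prop := fun a b =>
  (b.2 = a.2 ∨ a.1 ∈ T) ∧
    ((b.2 = true ∧ dirStep G d a.1 b.1) ∨ (b.2 = false ∧ dirStep G d b.1 a.1))

/-- There is a legal walk in model D₂^T from `u` (started in forward mode) arriving at
`v` with the last edge traversed forward (with either arrival mode acceptable when
`v ∈ T`). -/
def d2ArriveFwd (G : SimpleGraph V) (d : Sym2 V → Bool) (T : Set V) (u v : V) : Prop :=
  ∃ m : Bool, Relation.ReflTransGen (d2Step G d T) (u, true) (v, m) ∧ (m = true ∨ v ∈ T)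

/-- There is a legal walk in model D₂^T from `u` (started in forward mode) arriving at
`v` with the last edge traversed against its orientation (either arrival mode
acceptable when `v ∈ T`). -/
def d2ArriveRev (G : SimpleGraph V) (d : Sym2 V → Bool) (T : Set V) (u v : V) : Prop :=
  ∃ m : Bool, Relation.ReflTransGen (d2Step G d T) (u, true) (v, m) ∧ (m = false ∨ v ∈ T)

/-- `reachBoth G d T u x`: `x` is reachable from `u` both in forward- and in
reverse-arrival mode; `X(O)` is the set of such vertices. -/
def reachBoth (G : SimpleGraph V) (d : Sym2 V → Bool) (T : Set V) (u x : V) : Prop :=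
  d2ArriveFwd G d T u x ∧ d2ArriveRev G d T u x

/-- The reversal `O^r` of the orientation `O = d`: reverse exactly the edges not having
both endpoints in `X(O)`. -/
def revOrient (G : SimpleGraph V) (d : Sym2 V → Bool) (T : Set V) (u : V) :
    Sym2 V → Bool := fun e =>
  if ∀ x ∈ e, reachBoth G d T u x then d e else !(d e)

lemma dirStep_flip (G : SimpleGraph V) {d d' : Sym2 V → Bool} {a b : V}
    (hd : d' s(a,b) = !(d s(a,b))) : dirStep G d' a b ↔ dirStep G d b a := by
  unfold dirStep
  rw [Sym2.eq_swap (a := b) (b := a)]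
  cases hde : d s(a,b) <;> simp [hd, hde, G.adj_comm]

lemma dirStep_congr (G : SimpleGraph V) {d d' : Sym2 V → Bool} {a b : V}
    (hd : d' s(a,b) = d s(a,b)) : dirStep G d' a b ↔ dirStep G d a b := by
  unfold dirStep
  rw [hd]

lemma d2Step_rev (G : SimpleGraph V) (d : Sym2 V → Bool) (T : Set V)
    {p q : V × Bool} (hs : d2Step G d T p q) (c : Bool) (hc : c = !q.2 ∨ q.1 ∈ T) :
    d2Step G d T (q.1, c) (p.1, !q.2) := by
  obtain ⟨hleg, hdir⟩ := hs
  refine ⟨hc.imp (fun h => h.symm) id, ?_⟩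
  rcases hdir with ⟨h2, hd⟩ | ⟨h2, hd⟩
  · right; simp [h2, hd]
  · left; simp [h2, hd]

lemma walk_rev (G : SimpleGraph V) (d : Sym2 V → Bool) (T : Set V) :
    ∀ {p q : V × Bool}, Relation.ReflTransGen (d2Step G d T) p q →
    (p = q) ∨ ∃ e : Bool, (e = !p.2 ∨ p.1 ∈ T) ∧ ∀ c : Bool, (c = !q.2 ∨ q.1 ∈ T) →
      Relation.ReflTransGen (d2Step G d T) (q.1, c) (p.1, e) := by
  intro p q h
  induction h with
  | refl => exact Or.inl rfl
  | @tail q' r h hstep ih =>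
    right
    have hleg := hstep.1
    rcases ih with heq | ⟨e, he, hw⟩
    · refine ⟨!r.2, ?_, fun c hc => ?_⟩
      · subst heq
        rcases hleg with h1 | h1
        · exact Or.inl (by rw [h1])
        · exact Or.inr h1
      · subst heq
        exact Relation.ReflTransGen.single (d2Step_rev G d T hstep c hc)
    · refine ⟨e, he, fun c hc => ?_⟩
      refine Relation.ReflTransGen.head (d2Step_rev G d T hstep c hc) ?_
      apply hw
      rcases hleg with h1 | h1
      · exact Or.inl (by rw [h1])
      · exact Or.inr h1

lemma mem_X_of_reaches_X (G : SimpleGraph V) (d : Sym2 V → Bool) (T : Set V) (u : V)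
    {y : V} {m : Bool} {x : V} {mx : Bool}
    (h1 : Relation.ReflTransGen (d2Step G d T) (u, true) (y, m))
    (h2 : Relation.ReflTransGen (d2Step G d T) (y, m) (x, mx))
    (hx : reachBoth G d T u x) : reachBoth G d T u y := by
  by_cases hyT : y ∈ T
  · exact ⟨⟨m, h1, Or.inr hyT⟩, ⟨m, h1, Or.inr hyT⟩⟩
  rcases walk_rev G d T h2 with heq | ⟨e, he, hw⟩
  · obtain ⟨rfl, rfl⟩ := Prod.mk.injEq .. ▸ heq
    exact hx
  · have he' : e = !m := he.resolve_right hyT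
    -- get a walk from u to (x, c) with c = !mx ∨ x ∈ T
    have hxc : ∃ c : Bool, Relation.ReflTransGen (d2Step G d T) (u, true) (x, c) ∧
        (c = !mx ∨ x ∈ T) := by
      by_cases hxT : x ∈ T
      · exact ⟨mx, h1.trans h2, Or.inr hxT⟩
      · obtain ⟨⟨m1, w1, hm1⟩, ⟨m2, w2, hm2⟩⟩ := hx
        have hm1' : m1 = true := hm1.resolve_right hxT
        have hm2' : m2 = false := hm2.resolve_right hxT
        cases mx with
        | true => exact ⟨m2, w2, Or.inl (by simp [hm2'])⟩
        | false => exact ⟨m1, w1, Or.inl (by simp [hm1'])⟩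
    obtain ⟨c, wc, hc⟩ := hxc
    have hym : Relation.ReflTransGen (d2Step G d T) (u, true) (y, !m) :=
      (wc.trans (hw c hc)).trans (by rw [he'])
    cases m with
    | true => exact ⟨⟨true, h1, Or.inl rfl⟩, ⟨false, by simpa using hym, Or.inl rfl⟩⟩
    | false => exact ⟨⟨true, by simpa using hym, Or.inl rfl⟩, ⟨false, h1, Or.inl rfl⟩⟩

lemma walk_transfer (G : SimpleGraph V) (d : Sym2 V → Bool) (T : Set V) (u : V) :
    ∀ {q : V × Bool}, Relation.ReflTransGen (d2Step G d T) (u, true) q →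
    reachBoth G d T u q.1 →
    Relation.ReflTransGen (d2Step G (revOrient G d T u) T) (u, true) q := by
  intro q h
  induction h with
  | refl => intro _; exact Relation.ReflTransGen.refl
  | @tail p q h hstep ih =>
    intro hq
    have hp : reachBoth G d T u p.1 := by
      have := mem_X_of_reaches_X G d T u (y := p.1) (m := p.2) (x := q.1) (mx := q.2)
        h (Relation.ReflTransGen.single (by simpa using hstep)) hq
      exact this
    refine (ih hp).tail ?_
    obtain ⟨hleg, hdir⟩ := hstep
    refine ⟨hleg, ?_⟩
    have hd : revOrient G d T u s(p.1, q.1) = d s(p.1, q.1) := by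
      unfold revOrient
      rw [if_pos]
      intro z hz
      rcases Sym2.mem_iff.mp hz with rfl | rfl
      · exact hp
      · exact hq
    rcases hdir with ⟨h2, hdd⟩ | ⟨h2, hdd⟩
    · exact Or.inl ⟨h2, (dirStep_congr G hd).mpr hdd⟩
    · refine Or.inr ⟨h2, ?_⟩
      have hd' : revOrient G d T u s(q.1, p.1) = d s(q.1, p.1) := by
        rwa [Sym2.eq_swap (a := q.1) (b := p.1)]
      exact (dirStep_congr G hd').mpr hdd

lemma main_transfer (G : SimpleGraph V) (T : Set V) (u : V) (d d' : Sym2 V → Bool)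
    (X' : V → Prop) (hu : X' u)
    (hflip : ∀ a b : V, G.Adj a b →
      ((X' a ∧ X' b) → d' s(a,b) = d s(a,b)) ∧ (¬(X' a ∧ X' b) → d' s(a,b) = !(d s(a,b))))
    (hboth : ∀ a, X' a → a ∉ T →
      Relation.ReflTransGen (d2Step G d T) (u, true) (a, true) ∧
      Relation.ReflTransGen (d2Step G d T) (u, true) (a, false)) :
    ∀ {q : V × Bool}, Relation.ReflTransGen (d2Step G d' T) (u, true) q →
    ∃ m' : Bool, Relation.ReflTransGen (d2Step G d T) (u, true) (q.1, m') ∧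
      ((m' = if X' q.1 then q.2 else !q.2) ∨ q.1 ∈ T) := by
  intro q h
  induction h with
  | refl => exact ⟨true, Relation.ReflTransGen.refl, Or.inl (by simp [hu])⟩
  | @tail p q h hstep ih =>
    obtain ⟨ma', wa, hma⟩ := ih
    obtain ⟨hleg, hdir⟩ := hstep
    -- the underlying adjacency
    have hadj : G.Adj p.1 q.1 := by
      rcases hdir with ⟨_, hdd⟩ | ⟨_, hdd⟩
      · exact hdd.1
      · exact hdd.1.symm
    by_cases hXX : X' p.1 ∧ X' q.1
    · -- edge not flipped
      have hd : d' s(p.1, q.1) = d s(p.1, q.1) := (hflip p.1 q.1 hadj).1 hXX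
      have hd' : d' s(q.1, p.1) = d s(q.1, p.1) := by
        rwa [Sym2.eq_swap (a := q.1) (b := p.1)]
      have hdirD : (q.2 = true ∧ dirStep G d p.1 q.1) ∨ (q.2 = false ∧ dirStep G d q.1 p.1) := by
        rcases hdir with ⟨h2, hdd⟩ | ⟨h2, hdd⟩
        · exact Or.inl ⟨h2, (dirStep_congr G hd).mp hdd⟩
        · exact Or.inr ⟨h2, (dirStep_congr G hd').mp hdd⟩
      by_cases hpT : p.1 ∈ T
      · exact ⟨q.2, wa.tail ⟨Or.inr hpT, hdirD⟩, Or.inl (by simp [hXX.2])⟩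
      · have hma' : ma' = p.2 := by
          rcases hma with hma | hma
          · rw [hma, if_pos hXX.1]
          · exact absurd hma hpT
        have hleg' : q.2 = ma' := by
          rw [hma']
          exact hleg.resolve_right hpT
        exact ⟨q.2, wa.tail ⟨Or.inl hleg', hdirD⟩, Or.inl (by simp [hXX.2])⟩
    · -- edge flipped: in d we can step p.1 → q.1 arriving with mode !q.2
      have hd : d' s(p.1, q.1) = !(d s(p.1, q.1)) := (hflip p.1 q.1 hadj).2 hXX
      have hd' : d' s(q.1, p.1) = !(d s(q.1, p.1)) := by
        rwa [Sym2.eq_swap (a := q.1) (b := p.1)]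
      have hdirD : ((!q.2) = true ∧ dirStep G d p.1 q.1) ∨
          ((!q.2) = false ∧ dirStep G d q.1 p.1) := by
        rcases hdir with ⟨h2, hdd⟩ | ⟨h2, hdd⟩
        · exact Or.inr ⟨by simp [h2], (dirStep_flip G hd).mp hdd⟩
        · exact Or.inl ⟨by simp [h2], (dirStep_flip G hd').mp hdd⟩
      -- find a start state at p.1 in d from which the step is legal
      have hstep' : Relation.ReflTransGen (d2Step G d T) (u, true) (q.1, !q.2) := by
        by_cases hpT : p.1 ∈ T
        · exact wa.tail ⟨Or.inr hpT, hdirD⟩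
        · have hqp : q.2 = p.2 := hleg.resolve_right hpT
          by_cases hXp : X' p.1
          · obtain ⟨w1, w2⟩ := hboth p.1 hXp hpT
            cases hq2 : q.2 with
            | true =>
              rw [hq2] at hdirD
              exact w2.tail ⟨Or.inl rfl, hdirD⟩
            | false =>
              rw [hq2] at hdirD
              exact w1.tail ⟨Or.inl rfl, hdirD⟩
          · have hma' : ma' = !p.2 := by
              rcases hma with hma | hma
              · rw [hma, if_neg hXp]
              · exact absurd hma hpT
            exact wa.tail ⟨Or.inl (by rw [hma', hqp]), hdirD⟩
      by_cases hXq : X' q.1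
      · by_cases hqT : q.1 ∈ T
        · exact ⟨!q.2, hstep', Or.inr hqT⟩
        · obtain ⟨w1, w2⟩ := hboth q.1 hXq hqT
          cases hq2 : q.2 with
          | true => exact ⟨true, w1, Or.inl (by simp [hXq])⟩
          | false => exact ⟨false, w2, Or.inl (by simp [hXq])⟩
      · exact ⟨!q.2, hstep', Or.inl (by simp [hXq])⟩


/-- The key involution in the proof of the bunkbed theorem for model D₂: if some legal
walk from `u` reaches a vertex of `T`, then `X(O^r) = X(O)`, `(O^r)^r = O`, and there is
a walk arriving forward at `v` in `O` iff there is a walk arriving in reverse at `v`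
in `O^r`. -/
theorem revOrient_involution (G : SimpleGraph V) (T : Set V) (u v : V)
    (d : Sym2 V → Bool)
    (h : ∃ t ∈ T, ∃ m : Bool, Relation.ReflTransGen (d2Step G d T) (u, true) (t, m)) :
    ({x | reachBoth G (revOrient G d T u) T u x} = {x | reachBoth G d T u x}) ∧
    (revOrient G (revOrient G d T u) T u = d) ∧
    (d2ArriveFwd G d T u v ↔ d2ArriveRev G (revOrient G d T u) T u v) := by
  set d' := revOrient G d T u with hd'def
  set X : V → Prop := reachBoth G d T u with hXdef
  -- u ∈ X
  have hu : X u := by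
    refine ⟨⟨true, Relation.ReflTransGen.refl, Or.inl rfl⟩, ?_⟩
    by_cases huT : u ∈ T
    · exact ⟨true, Relation.ReflTransGen.refl, Or.inr huT⟩
    obtain ⟨t, htT, m, w⟩ := h
    rcases walk_rev G d T w with heq | ⟨e, he, hw⟩
    · injection heq with h1 h2
      exact absurd (h1 ▸ htT) huT
    · have he' : e = false := by simpa using he.resolve_right huT
      refine ⟨false, ?_, Or.inl rfl⟩
      have := w.trans (hw m (Or.inr htT))
      rwa [he'] at this
  -- first instance of the transfer lemma: d' → d
  have hflip1 : ∀ a b : V, G.Adj a b →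
      ((X a ∧ X b) → d' s(a,b) = d s(a,b)) ∧ (¬(X a ∧ X b) → d' s(a,b) = !(d s(a,b))) := by
    intro a b _
    constructor
    · intro ⟨ha, hb⟩
      rw [hd'def, revOrient, if_pos]
      intro z hz
      rcases Sym2.mem_iff.mp hz with rfl | rfl
      exacts [ha, hb]
    · intro hne
      rw [hd'def, revOrient, if_neg]
      intro hall
      exact hne ⟨hall a (Sym2.mem_mk_left a b), hall b (Sym2.mem_mk_right a b)⟩
  have hboth1 : ∀ a, X a → a ∉ T →
      Relation.ReflTransGen (d2Step G d T) (u, true) (a, true) ∧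
      Relation.ReflTransGen (d2Step G d T) (u, true) (a, false) := by
    intro a ⟨⟨m1, w1, hm1⟩, ⟨m2, w2, hm2⟩⟩ haT
    exact ⟨(hm1.resolve_right haT) ▸ w1, (hm2.resolve_right haT) ▸ w2⟩
  have main1 : ∀ {q : V × Bool}, Relation.ReflTransGen (d2Step G d' T) (u, true) q →
      ∃ m' : Bool, Relation.ReflTransGen (d2Step G d T) (u, true) (q.1, m') ∧
        ((m' = if X q.1 then q.2 else !q.2) ∨ q.1 ∈ T) :=
    fun {q} => main_transfer G T u d d' X hu hflip1 hboth1 (q := q)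
  -- second instance: d → d'
  have hboth2 : ∀ a, X a → a ∉ T →
      Relation.ReflTransGen (d2Step G d' T) (u, true) (a, true) ∧
      Relation.ReflTransGen (d2Step G d' T) (u, true) (a, false) := by
    intro a ha haT
    obtain ⟨w1, w2⟩ := hboth1 a ha haT
    exact ⟨walk_transfer G d T u w1 ha, walk_transfer G d T u w2 ha⟩
  have hflip2 : ∀ a b : V, G.Adj a b →
      ((X a ∧ X b) → d s(a,b) = d' s(a,b)) ∧ (¬(X a ∧ X b) → d s(a,b) = !(d' s(a,b))) := by
    intro a b hab
    obtain ⟨h1, h2⟩ := hflip1 a b hab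
    constructor
    · intro hx; exact (h1 hx).symm
    · intro hnx; rw [h2 hnx, Bool.not_not]
  have main2 : ∀ {q : V × Bool}, Relation.ReflTransGen (d2Step G d T) (u, true) q →
      ∃ m' : Bool, Relation.ReflTransGen (d2Step G d' T) (u, true) (q.1, m') ∧
        ((m' = if X q.1 then q.2 else !q.2) ∨ q.1 ∈ T) :=
    fun {q} => main_transfer G T u d' d X hu hflip2 hboth2 (q := q)
  -- the set equality
  have hXeq : ∀ z, reachBoth G d' T u z ↔ X z := by
    intro z
    constructor
    · rintro ⟨⟨m1, w1, hm1⟩, ⟨m2, w2, hm2⟩⟩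
      by_cases hzT : z ∈ T
      · obtain ⟨m', w', _⟩ := main1 w1
        exact ⟨⟨m', w', Or.inr hzT⟩, ⟨m', w', Or.inr hzT⟩⟩
      by_cases hzX : X z
      · exact hzX
      have hm1' : m1 = true := hm1.resolve_right hzT
      have hm2' : m2 = false := hm2.resolve_right hzT
      subst hm1' hm2'
      obtain ⟨n1, v1, hn1⟩ := main1 w1
      obtain ⟨n2, v2, hn2⟩ := main1 w2
      have hn1' : n1 = false := by simpa [hzX] using hn1.resolve_right hzT
      have hn2' : n2 = true := by simpa [hzX] using hn2.resolve_right hzT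
      exact ⟨⟨n2, v2, Or.inl hn2'⟩, ⟨n1, v1, Or.inl hn1'⟩⟩
    · intro hz
      by_cases hzT : z ∈ T
      · obtain ⟨⟨m1, w1, _⟩, _⟩ := hz
        obtain ⟨m', w', _⟩ := main2 w1
        exact ⟨⟨m', w', Or.inr hzT⟩, ⟨m', w', Or.inr hzT⟩⟩
      · obtain ⟨w1, w2⟩ := hboth2 z hz hzT
        exact ⟨⟨true, w1, Or.inl rfl⟩, ⟨false, w2, Or.inl rfl⟩⟩
  refine ⟨Set.ext fun z => hXeq z, ?_, ?_⟩
  · -- involution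
    funext e
    have hcond : (∀ z ∈ e, reachBoth G d' T u z) ↔ (∀ z ∈ e, X z) :=
      forall_congr' fun z => forall_congr' fun _ => hXeq z
    by_cases hc : ∀ z ∈ e, X z
    · rw [show revOrient G d' T u e =
          (if ∀ z ∈ e, reachBoth G d' T u z then d' e else !(d' e)) from rfl,
        if_pos (hcond.mpr hc), hd'def,
        show revOrient G d T u e = (if ∀ z ∈ e, X z then d e else !(d e)) from rfl,
        if_pos hc]
    · rw [show revOrient G d' T u e =
          (if ∀ z ∈ e, reachBoth G d' T u z then d' e else !(d' e)) from rfl,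
        if_neg (fun hh => hc (hcond.mp hh)), hd'def,
        show revOrient G d T u e = (if ∀ z ∈ e, X z then d e else !(d e)) from rfl,
        if_neg hc, Bool.not_not]
  · -- fwd in d iff rev in d'
    constructor
    · rintro ⟨m, w, hm⟩
      by_cases hvT : v ∈ T
      · obtain ⟨m', w', _⟩ := main2 w
        exact ⟨m', w', Or.inr hvT⟩
      have hm' : m = true := hm.resolve_right hvT
      subst hm'
      by_cases hvX : X v
      · obtain ⟨m2, w2, hm2⟩ := hvX.2
        have hm2' : m2 = false := hm2.resolve_right hvT
        exact ⟨m2, walk_transfer G d T u w2 hvX, Or.inl hm2'⟩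
      · obtain ⟨m', w', hn⟩ := main2 w
        have : m' = false := by simpa [hvX] using hn.resolve_right hvT
        exact ⟨m', w', Or.inl this⟩
    · rintro ⟨m, w, hm⟩
      by_cases hvT : v ∈ T
      · obtain ⟨m', w', _⟩ := main1 w
        exact ⟨m', w', Or.inr hvT⟩
      have hm' : m = false := hm.resolve_right hvT
      subst hm'
      by_cases hvX : X v
      · exact hvX.1
      · obtain ⟨m', w', hn⟩ := main1 w
        have : m' = true := by simpa [hvX] using hn.resolve_right hvT
        exact ⟨m', w', Or.inl this⟩

end
end

section
/- (Y-operation soundness) Let G be a finite graph with model E₃^T and x ∈ V ∖ T a vertex of degree 3 with neighbors a, b, c. Condition on the coloring of ax, bx, cx: if bx, cx share a color different from ax, connection probabilities equal those of G₁ = (G ∖ ax)/bx; if bx differs from ax, cx, they equal those of G₂ = (G ∖ bx)/cx; if cx differs from ax, bx, they equal those of G₃ = (G ∖ cx)/ax; if all three agree, they equal those of the hypergraph model G₄ where ax, bx, cx are constrained to a single uniform color. Hence P_G(u₀→v_j) = (1/4) Σ_{i=1}^{4} P_{G_i}(u₀→v_j). -/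
/-!
Since `x ∉ T`, a walk through `x` enters and leaves it in one color layer. If `ax` is the odd
edge of the star, then in the layer of `ax` the copy of `x` is a pendant vertex at `a`, and in
the other layer it is the midpoint of the path `b x c`. Gluing `x` to `a`, resp. `b`, therefore
identifies reachability in `G` with reachability in `(G ∖ ax)/bx`, and the colorings of this
pattern correspond to the colorings of the contracted graph. The colorings in which the star is
monochromatic are those of the block model. Each of the four patterns carries `2 ^ (|E| - 2)`
colorings, whence the factor `1/4`.
-/

open scoped Classical

noncomputable section

/-- A finite multigraph without loops on vertex set `V`. -/
structure Multigraph (V : Type) where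
  E : Type
  fintypeE : Fintype E
  decEqE : DecidableEq E
  ends : E → Sym2 V
  not_isDiag : ∀ e, ¬ (ends e).IsDiag

attribute [instance] Multigraph.fintypeE Multigraph.decEqE

variable {V : Type}

/-- Colored presence graph of model E₃ on a multigraph: the copy of edge `e` lives in
the layer given by its color `c e`; vertical edges at `T`. -/
def Multigraph.ccGraph (M : Multigraph V) (c : M.E → Bool) (T : Set V) :
    SimpleGraph (V × Bool) where
  Adj a b := (a.2 = b.2 ∧ ∃ e, M.ends e = s(a.1, b.1) ∧ c e = a.2) ∨
    (a.1 = b.1 ∧ a.2 ≠ b.2 ∧ a.1 ∈ T)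
  symm := by
    constructor
    intro a b h
    rcases h with ⟨h1, e, he, hc⟩ | ⟨h1, h2, h3⟩
    · exact Or.inl ⟨h1.symm, e, by rwa [Sym2.eq_swap], by rwa [← h1]⟩
    · exact Or.inr ⟨h1.symm, Ne.symm h2, h1 ▸ h3⟩
  loopless := by
    constructor
    rintro a (⟨h1, e, he, hc⟩ | ⟨h1, h2, h3⟩)
    · exact M.not_isDiag e (by rw [he]; exact Sym2.mk_isDiag_iff.mpr rfl)
    · exact h2 rfl

/-- Connection probability in model E₃^T on a multigraph. -/
def PE3M (M : Multigraph V) (T : Set V) (x y : V × Bool) : ℝ :=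
  (∑ c : M.E → Bool, pInd ((M.ccGraph c T).Reachable x y)) / 2 ^ Fintype.card M.E

/-- Restriction of a multigraph to the edges satisfying `P` (edge deletion). -/
def Multigraph.restrict (M : Multigraph V) (P : M.E → Prop) : Multigraph V where
  E := {e : M.E // P e}
  fintypeE := Subtype.fintype _
  decEqE := inferInstance
  ends e := M.ends e.1
  not_isDiag e := M.not_isDiag e.1

/-- Contraction of the vertex `x` into the vertex `y`: every edge endpoint equal to `x`
is renamed `y`, and the edges that become loops are removed. -/
def Multigraph.contract [DecidableEq V] (M : Multigraph V) (x y : V) : Multigraph V where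
  E := {e : M.E // ¬ (Sym2.map (fun w => if w = x then y else w) (M.ends e)).IsDiag}
  fintypeE := Subtype.fintype _
  decEqE := inferInstance
  ends e := Sym2.map (fun w => if w = x then y else w) (M.ends e.1)
  not_isDiag e := e.2


/-- The coloring of the edges of `M` in which the three edges `ea, eb, ec` incident to
the degree-3 vertex `x` are constrained to share one common color (model E₄ with the
block `{ea,eb,ec}` and singletons elsewhere). -/
def yColor (M : Multigraph V) (ea eb ec : M.E)
    (γ : ({e : M.E // e ≠ ea ∧ e ≠ eb ∧ e ≠ ec} ⊕ Unit) → Bool) : M.E → Bool :=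
  fun e =>
    if h : e = ea ∨ e = eb ∨ e = ec then γ (Sum.inr ())
    else γ (Sum.inl ⟨e, by push_neg at h; exact h⟩)

/-- Connection probability in the hypergraph model E₄ where the star edges
`ea, eb, ec` form a single block (one uniform color). -/
def PE4y (M : Multigraph V) (ea eb ec : M.E) (T : Set V) (x y : V × Bool) : ℝ :=
  (∑ γ : ({e : M.E // e ≠ ea ∧ e ≠ eb ∧ e ≠ ec} ⊕ Unit) → Bool,
      pInd ((M.ccGraph (yColor M ea eb ec γ) T).Reachable x y)) /
    2 ^ Fintype.card (({e : M.E // e ≠ ea ∧ e ≠ eb ∧ e ≠ ec} ⊕ Unit))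

theorem SimpleGraph.Reachable.lift {α β : Type*} {G : SimpleGraph α} {H : SimpleGraph β}
    (f : α → β) (hf : ∀ p q, G.Adj p q → H.Reachable (f p) (f q)) {p q : α}
    (h : G.Reachable p q) : H.Reachable (f p) (f q) := by
  rw [SimpleGraph.reachable_iff_reflTransGen] at h ⊢
  exact Relation.ReflTransGen.lift' f
    (fun p q hpq => (SimpleGraph.reachable_iff_reflTransGen _ _).1 (hf p q hpq)) _ _ h

theorem SimpleGraph.reachable_iff_of_adj {α : Type*} {G H : SimpleGraph α} (f : α → α)
    (hGH : ∀ p q, G.Adj p q → H.Reachable (f p) (f q))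
    (hHG : ∀ p q, H.Adj p q → G.Reachable p q) {u v : α} (hu : f u = u) (hv : f v = v) :
    G.Reachable u v ↔ H.Reachable u v :=
  ⟨fun h => hu ▸ hv ▸ h.lift f hGH, fun h => h.lift id hHG⟩

theorem Fintype.sum_ite_eq_sum_comp {α β R : Type*} [Fintype α] [Fintype β] [AddCommMonoid R]
    {P : α → Prop} [DecidablePred P] (s : β → α) (r : α → β) (hs : ∀ b, P (s b))
    (hrs : ∀ b, r (s b) = b) (hsr : ∀ a, P a → s (r a) = a) (F : α → R) :
    ∑ a, (if P a then F a else 0) = ∑ b, F (s b) := by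
  rw [← Finset.sum_filter]
  exact Finset.sum_nbij' r s (by simp) (by simpa using hs) (by simpa using hsr)
    (by simp [hrs]) (by simp +contextual [hsr])

theorem Fintype.card_subtype_notMem {α : Type*} [Fintype α] [DecidableEq α] (s : Finset α) :
    Fintype.card {a // a ∉ s} = Fintype.card α - s.card := by
  rw [Fintype.card_subtype, ← Finset.card_compl]
  congr 1
  ext
  simp

theorem sum_split_by_odd_one_out {E R : Type*} [Fintype E] [DecidableEq E] [AddCommMonoid R]
    (ea eb ec : E) (F : (E → Bool) → R) :
    ∑ cl, F cl =
      (∑ cl, if cl eb = cl ec ∧ cl ea ≠ cl eb then F cl else 0) +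
      (∑ cl, if cl ea = cl ec ∧ cl eb ≠ cl ea then F cl else 0) +
      (∑ cl, if cl ea = cl eb ∧ cl ec ≠ cl ea then F cl else 0) +
      (∑ cl, if cl ea = cl eb ∧ cl eb = cl ec then F cl else 0) := by
  simp only [← Finset.sum_add_distrib]
  refine Fintype.sum_congr _ _ fun cl => ?_
  cases cl ea <;> cases cl eb <;> cases cl ec <;> simp

theorem sum_allEqual_eq_sum_yColor {R : Type*} [AddCommMonoid R] (M : Multigraph V)
    (ea eb ec : M.E) (F : (M.E → Bool) → R) :
    (∑ cl : M.E → Bool, if cl ea = cl eb ∧ cl eb = cl ec then F cl else 0) =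
      ∑ γ, F (yColor M ea eb ec γ) := by
  refine Fintype.sum_ite_eq_sum_comp (yColor M ea eb ec)
    (fun cl => Sum.elim (fun e => cl e.1) fun _ => cl ea) (fun γ => by simp [yColor])
    (fun γ => ?_) (fun cl hcl => ?_) F
  · ext (e | _)
    · simp [yColor, e.2.1, e.2.2.1, e.2.2.2]
    · simp [yColor]
  · funext e
    by_cases he : e = ea ∨ e = eb ∨ e = ec
    · rcases he with rfl | rfl | rfl <;> simp [yColor, hcl.1, hcl.2]
    · simp [yColor, he]

theorem Multigraph.ne_of_ends_eq (M : Multigraph V) {e : M.E} {p q : V}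
    (h : M.ends e = s(p, q)) : p ≠ q := fun hpq =>
  M.not_isDiag e (by rw [h, hpq]; exact Sym2.mk_isDiag_iff.2 rfl)

theorem Sym2.map_ite_eq_self {α : Type*} [DecidableEq α] {x y : α} {s : Sym2 α} (hx : x ∉ s) :
    Sym2.map (fun w => if w = x then y else w) s = s := by
  rw [Sym2.map_congr (g := fun w => w) fun w hw => if_neg (ne_of_mem_of_not_mem hw hx),
    Sym2.map_id', id]

structure Multigraph.IsStar (M : Multigraph V) (x a b c : V) (ea eb ec : M.E) : Prop where
  ends_a : M.ends ea = s(a, x)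
  ends_b : M.ends eb = s(b, x)
  ends_c : M.ends ec = s(c, x)
  a_ne_b : a ≠ b
  a_ne_c : a ≠ c
  b_ne_c : b ≠ c
  eq_of_mem_ends : ∀ e, x ∈ M.ends e → e = ea ∨ e = eb ∨ e = ec

def collapseAt [DecidableEq V] (x a b : V) (α : Bool) (p : V × Bool) : V × Bool :=
  (if p.1 = x then (if p.2 = α then a else b) else p.1, p.2)

theorem collapseAt_of_ne [DecidableEq V] {x a b : V} {α : Bool} {p : V × Bool} (hp : p.1 ≠ x) :
    collapseAt x a b α p = p := by
  simp [collapseAt, hp]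

theorem collapseAt_odd_layer [DecidableEq V] {x a b w : V} {α : Bool} (hw : w = a ∨ w = x) :
    collapseAt x a b α (w, α) = (a, α) := by
  rcases hw with rfl | rfl <;> simp [collapseAt]

theorem collapseAt_other_layer [DecidableEq V] {x a b w : V} {α β : Bool}
    (hw : w = x → β ≠ α) :
    collapseAt x a b α (w, β) = (if w = x then b else w, β) := by
  by_cases h : w = x <;> simp [collapseAt, h, hw]

namespace Multigraph.IsStar

variable {M : Multigraph V} {x a b c : V} {ea eb ec : M.E}

theorem rotate (hS : M.IsStar x a b c ea eb ec) : M.IsStar x b c a eb ec ea where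
  ends_a := hS.ends_b
  ends_b := hS.ends_c
  ends_c := hS.ends_a
  a_ne_b := hS.b_ne_c
  a_ne_c := hS.a_ne_b.symm
  b_ne_c := hS.a_ne_c.symm
  eq_of_mem_ends e he := by have := hS.eq_of_mem_ends e he; tauto

theorem ea_ne_eb (hS : M.IsStar x a b c ea eb ec) : ea ≠ eb := fun h =>
  hS.a_ne_b (Sym2.congr_left.1 (by rw [← hS.ends_a, ← hS.ends_b, h]))

theorem ea_ne_ec (hS : M.IsStar x a b c ea eb ec) : ea ≠ ec := fun h =>
  hS.a_ne_c (Sym2.congr_left.1 (by rw [← hS.ends_a, ← hS.ends_c, h]))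

theorem eb_ne_ec (hS : M.IsStar x a b c ea eb ec) : eb ≠ ec := fun h =>
  hS.b_ne_c (Sym2.congr_left.1 (by rw [← hS.ends_b, ← hS.ends_c, h]))

theorem color_eq_of_mem_ends (hS : M.IsStar x a b c ea eb ec) {cl : M.E → Bool}
    (hsame : cl eb = cl ec) {e : M.E} (hea : e ≠ ea) (hx : x ∈ M.ends e) : cl e = cl eb := by
  rcases hS.eq_of_mem_ends e hx with rfl | rfl | rfl
  exacts [absurd rfl hea, rfl, hsame.symm]

theorem two_le_card (hS : M.IsStar x a b c ea eb ec) : 2 ≤ Fintype.card M.E :=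
  Fintype.one_lt_card_iff.2 ⟨ea, eb, hS.ea_ne_eb⟩

theorem card_yBlocks (hS : M.IsStar x a b c ea eb ec) :
    Fintype.card ({e : M.E // e ≠ ea ∧ e ≠ eb ∧ e ≠ ec} ⊕ Unit) =
      Fintype.card M.E - 2 := by
  have hequiv : {e : M.E // e ≠ ea ∧ e ≠ eb ∧ e ≠ ec} ≃
      {e : M.E // e ∉ ({ea, eb, ec} : Finset M.E)} :=
    Equiv.subtypeEquivRight fun e => by simp
  have hcard : ({ea, eb, ec} : Finset M.E).card = 3 := by
    rw [Finset.card_insert_of_notMem (by simp [hS.ea_ne_eb, hS.ea_ne_ec]),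
      Finset.card_pair hS.eb_ne_ec]
  have h3 : 3 ≤ Fintype.card M.E := hcard ▸ Finset.card_le_univ _
  rw [Fintype.card_sum, Fintype.card_unit, Fintype.card_congr hequiv,
    Fintype.card_subtype_notMem, hcard]
  omega

theorem sum_allEqual_div_eq_PE4y (hS : M.IsStar x a b c ea eb ec) (T : Set V)
    (p q : V × Bool) :
    (∑ cl : M.E → Bool, if cl ea = cl eb ∧ cl eb = cl ec then
        pInd ((M.ccGraph cl T).Reachable p q) else 0) / 2 ^ (Fintype.card M.E - 2) =
      PE4y M ea eb ec T p q := by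
  rw [PE4y, hS.card_yBlocks, sum_allEqual_eq_sum_yColor]

variable [DecidableEq V]

theorem not_isDiag_contract_iff (hS : M.IsStar x a b c ea eb ec) {e : M.E} (hea : e ≠ ea) :
    ¬ (Sym2.map (fun w => if w = x then b else w) (M.ends e)).IsDiag ↔ e ≠ eb := by
  refine ⟨?_, fun heb hdiag => ?_⟩
  · rintro hnd rfl
    apply hnd
    rw [hS.ends_b, Sym2.map_mk, Sym2.mk_isDiag_iff]
    split_ifs <;> simp_all
  · by_cases hx : x ∈ M.ends e
    · obtain rfl : e = ec := by
        rcases hS.eq_of_mem_ends e hx with h | h | h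
        exacts [absurd h hea, absurd h heb, h]
      rw [hS.ends_c, Sym2.map_mk, Sym2.mk_isDiag_iff,
        if_neg (M.ne_of_ends_eq hS.ends_c), if_pos rfl] at hdiag
      exact hS.b_ne_c hdiag.symm
    · rw [Sym2.map_ite_eq_self hx] at hdiag
      exact M.not_isDiag e hdiag

variable {T : Set V}

theorem reachable_collapseAt_of_adj (hS : M.IsStar x a b c ea eb ec) (hxT : x ∉ T)
    {cl : M.E → Bool} (hsame : cl eb = cl ec) (hodd : cl ea ≠ cl eb) {p q : V × Bool}
    (h : (M.ccGraph cl T).Adj p q) :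
    (((M.restrict (fun e => e ≠ ea)).contract x b).ccGraph (fun e => cl e.1.1) T).Reachable
      (collapseAt x a b (cl ea) p) (collapseAt x a b (cl ea) q) := by
  obtain ⟨p, γ⟩ := p
  obtain ⟨q, δ⟩ := q
  rcases h with ⟨rfl, e, he, rfl⟩ | ⟨rfl, hne, hT⟩
  · have hpe : p ∈ M.ends e := he ▸ Sym2.mem_mk_left p q
    have hqe : q ∈ M.ends e := he ▸ Sym2.mem_mk_right p q
    by_cases hea : e = ea
    · subst hea
      rw [hS.ends_a, Sym2.mem_iff] at hpe hqe
      rw [collapseAt_odd_layer hpe, collapseAt_odd_layer hqe]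
    · have hother : ∀ w ∈ M.ends e, w = x → cl e ≠ cl ea := fun w hw hwx => by
        rw [hS.color_eq_of_mem_ends hsame hea (hwx ▸ hw)]
        exact hodd.symm
      rw [collapseAt_other_layer (hother p hpe), collapseAt_other_layer (hother q hqe)]
      have hmap : Sym2.map (fun w => if w = x then b else w) (M.ends e) =
          s(if p = x then b else p, if q = x then b else q) := by
        rw [he, Sym2.map_mk]
      by_cases hd : (Sym2.map (fun w => if w = x then b else w) (M.ends e)).IsDiag
      · rw [hmap, Sym2.mk_isDiag_iff] at hd
        exact hd ▸ SimpleGraph.Reachable.refl _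
      · exact SimpleGraph.Adj.reachable (Or.inl ⟨rfl, ⟨⟨e, hea⟩, hd⟩, hmap, rfl⟩)
  · have hpx : p ≠ x := fun h => hxT (h ▸ hT)
    rw [collapseAt_of_ne hpx, collapseAt_of_ne hpx]
    exact SimpleGraph.Adj.reachable (Or.inr ⟨rfl, hne, hT⟩)

theorem reachable_of_adj_contract (hS : M.IsStar x a b c ea eb ec) {cl : M.E → Bool}
    (hsame : cl eb = cl ec) {p q : V × Bool}
    (h : (((M.restrict (fun e => e ≠ ea)).contract x b).ccGraph (fun e => cl e.1.1) T).Adj p q) :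
    (M.ccGraph cl T).Reachable p q := by
  obtain ⟨p, γ⟩ := p
  obtain ⟨q, δ⟩ := q
  rcases h with ⟨rfl, ⟨⟨e, hea⟩, hnd⟩, he, rfl⟩ | ⟨rfl, hne, hT⟩
  · have hglue : ∀ w ∈ M.ends e,
        (M.ccGraph cl T).Reachable (w, cl e) (if w = x then b else w, cl e) := by
      intro w hw
      split_ifs with hwx
      · subst hwx
        rw [hS.color_eq_of_mem_ends hsame hea hw]
        exact SimpleGraph.Adj.reachable
          (Or.inl ⟨rfl, eb, by rw [hS.ends_b, Sym2.eq_swap], rfl⟩)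
      · rfl
    change Sym2.map _ (M.ends e) = s(p, q) at he
    generalize hends : M.ends e = s at he hglue
    induction s using Sym2.ind with
    | _ w₁ w₂ =>
      have hpath : (M.ccGraph cl T).Reachable
          (if w₁ = x then b else w₁, cl e) (if w₂ = x then b else w₂, cl e) :=
        ((hglue w₁ (Sym2.mem_mk_left _ _)).symm.trans
          (show (M.ccGraph cl T).Adj (w₁, cl e) (w₂, cl e) from
            Or.inl ⟨rfl, e, hends, rfl⟩).reachable).trans
          (hglue w₂ (Sym2.mem_mk_right _ _))
      rw [Sym2.map_mk, Sym2.eq_iff] at he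
      rcases he with ⟨rfl, rfl⟩ | ⟨rfl, rfl⟩
      exacts [hpath, hpath.symm]
  · exact SimpleGraph.Adj.reachable (Or.inr ⟨rfl, hne, hT⟩)

theorem reachable_iff_contract (hS : M.IsStar x a b c ea eb ec) (hxT : x ∉ T)
    {cl : M.E → Bool} (hsame : cl eb = cl ec) (hodd : cl ea ≠ cl eb) {p q : V × Bool}
    (hp : p.1 ≠ x) (hq : q.1 ≠ x) :
    (M.ccGraph cl T).Reachable p q ↔
      (((M.restrict (fun e => e ≠ ea)).contract x b).ccGraph (fun e => cl e.1.1) T).Reachable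
        p q :=
  SimpleGraph.reachable_iff_of_adj (collapseAt x a b (cl ea))
    (fun _ _ h => hS.reachable_collapseAt_of_adj hxT hsame hodd h)
    (fun _ _ h => hS.reachable_of_adj_contract hsame h)
    (collapseAt_of_ne hp) (collapseAt_of_ne hq)

def contractEdge (hS : M.IsStar x a b c ea eb ec) (e : M.E) (hea : e ≠ ea) (heb : e ≠ eb) :
    ((M.restrict (fun e => e ≠ ea)).contract x b).E :=
  ⟨⟨e, hea⟩, (hS.not_isDiag_contract_iff hea).2 heb⟩

def liftColoring (hS : M.IsStar x a b c ea eb ec)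
    (d : ((M.restrict (fun e => e ≠ ea)).contract x b).E → Bool) : M.E → Bool := fun e =>
  if hea : e = ea then !d (hS.contractEdge ec hS.ea_ne_ec.symm hS.eb_ne_ec.symm)
  else if heb : e = eb then d (hS.contractEdge ec hS.ea_ne_ec.symm hS.eb_ne_ec.symm)
  else d (hS.contractEdge e hea heb)

theorem liftColoring_pattern (hS : M.IsStar x a b c ea eb ec)
    (d : ((M.restrict (fun e => e ≠ ea)).contract x b).E → Bool) :
    hS.liftColoring d eb = hS.liftColoring d ec ∧
      hS.liftColoring d ea ≠ hS.liftColoring d eb := by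
  simp [liftColoring, hS.ea_ne_eb.symm, hS.ea_ne_ec.symm, hS.eb_ne_ec.symm]

theorem restrict_liftColoring (hS : M.IsStar x a b c ea eb ec)
    (d : ((M.restrict (fun e => e ≠ ea)).contract x b).E → Bool) :
    (fun e : ((M.restrict (fun e => e ≠ ea)).contract x b).E => hS.liftColoring d e.1.1) = d := by
  funext e
  have heb : e.1.1 ≠ eb := (hS.not_isDiag_contract_iff e.1.2).1 e.2
  simp only [liftColoring, dif_neg e.1.2, dif_neg heb]
  rfl

theorem liftColoring_restrict (hS : M.IsStar x a b c ea eb ec) {cl : M.E → Bool}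
    (hsame : cl eb = cl ec) (hodd : cl ea ≠ cl eb) :
    hS.liftColoring (fun e => cl e.1.1) = cl := by
  funext e
  by_cases hea : e = ea
  · subst hea
    simp only [liftColoring, contractEdge, ← hsame]
    cases h : cl e <;> cases h' : cl eb <;> simp_all
  by_cases heb : e = eb
  · subst heb
    simp [liftColoring, hea, contractEdge, hsame]
  · simp [liftColoring, hea, heb, contractEdge]

theorem card_contract (hS : M.IsStar x a b c ea eb ec) :
    Fintype.card ((M.restrict (fun e => e ≠ ea)).contract x b).E = Fintype.card M.E - 2 := by
  have hequiv : ((M.restrict (fun e => e ≠ ea)).contract x b).E ≃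
      {e : M.E // e ∉ ({ea, eb} : Finset M.E)} :=
    { toFun e := ⟨e.1.1, by simpa using ⟨e.1.2, (hS.not_isDiag_contract_iff e.1.2).1 e.2⟩⟩
      invFun e :=
        have he : e.1 ≠ ea ∧ e.1 ≠ eb := by simpa using e.2
        hS.contractEdge e.1 he.1 he.2
      left_inv _ := rfl
      right_inv _ := rfl }
  rw [Fintype.card_congr hequiv, Fintype.card_subtype_notMem,
    Finset.card_pair hS.ea_ne_eb]

theorem sum_odd_eq_sum_contract (hS : M.IsStar x a b c ea eb ec) (hxT : x ∉ T)
    {p q : V × Bool} (hp : p.1 ≠ x) (hq : q.1 ≠ x) :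
    (∑ cl : M.E → Bool, if cl eb = cl ec ∧ cl ea ≠ cl eb then
        pInd ((M.ccGraph cl T).Reachable p q) else 0) =
      ∑ d : ((M.restrict (fun e => e ≠ ea)).contract x b).E → Bool,
        pInd ((((M.restrict (fun e => e ≠ ea)).contract x b).ccGraph d T).Reachable p q) := by
  rw [Fintype.sum_ite_eq_sum_comp hS.liftColoring (fun cl e => cl e.1.1)
    hS.liftColoring_pattern hS.restrict_liftColoring fun _ h => hS.liftColoring_restrict h.1 h.2]
  refine Fintype.sum_congr _ _ fun d => ?_
  obtain ⟨hsame, hodd⟩ := hS.liftColoring_pattern d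
  rw [hS.reachable_iff_contract hxT hsame hodd hp hq, hS.restrict_liftColoring]

theorem sum_odd_div_eq_PE3M_contract (hS : M.IsStar x a b c ea eb ec) (hxT : x ∉ T)
    {p q : V × Bool} (hp : p.1 ≠ x) (hq : q.1 ≠ x) :
    (∑ cl : M.E → Bool, if cl eb = cl ec ∧ cl ea ≠ cl eb then
        pInd ((M.ccGraph cl T).Reachable p q) else 0) / 2 ^ (Fintype.card M.E - 2) =
      PE3M ((M.restrict (fun e => e ≠ ea)).contract x b) T p q := by
  rw [PE3M, hS.card_contract, hS.sum_odd_eq_sum_contract hxT hp hq]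

end Multigraph.IsStar

theorem PE3M_Y_operation_general [DecidableEq V] (M : Multigraph V) (T : Set V)
    (x a b c u v : V) (hxT : x ∉ T) (hxu : x ≠ u) (hxv : x ≠ v)
    (hab : a ≠ b) (hac : a ≠ c) (hbc : b ≠ c)
    (ea eb ec : M.E)
    (hendsa : M.ends ea = s(a, x)) (hendsb : M.ends eb = s(b, x))
    (hendsc : M.ends ec = s(c, x))
    (hdeg : ∀ e : M.E, x ∈ M.ends e → e = ea ∨ e = eb ∨ e = ec)
    (j : Bool) :
    ((∑ cl : M.E → Bool,
        if cl eb = cl ec ∧ cl ea ≠ cl eb then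
          pInd ((M.ccGraph cl T).Reachable (u, false) (v, j)) else 0) /
      2 ^ (Fintype.card M.E - 2) =
      PE3M ((M.restrict (fun e => e ≠ ea)).contract x b) T (u, false) (v, j)) ∧
    ((∑ cl : M.E → Bool,
        if cl ea = cl ec ∧ cl eb ≠ cl ea then
          pInd ((M.ccGraph cl T).Reachable (u, false) (v, j)) else 0) /
      2 ^ (Fintype.card M.E - 2) =
      PE3M ((M.restrict (fun e => e ≠ eb)).contract x c) T (u, false) (v, j)) ∧
    ((∑ cl : M.E → Bool,
        if cl ea = cl eb ∧ cl ec ≠ cl ea then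
          pInd ((M.ccGraph cl T).Reachable (u, false) (v, j)) else 0) /
      2 ^ (Fintype.card M.E - 2) =
      PE3M ((M.restrict (fun e => e ≠ ec)).contract x a) T (u, false) (v, j)) ∧
    ((∑ cl : M.E → Bool,
        if cl ea = cl eb ∧ cl eb = cl ec then
          pInd ((M.ccGraph cl T).Reachable (u, false) (v, j)) else 0) /
      2 ^ (Fintype.card M.E - 2) =
      PE4y M ea eb ec T (u, false) (v, j)) ∧
    (PE3M M T (u, false) (v, j) =
      (PE3M ((M.restrict (fun e => e ≠ ea)).contract x b) T (u, false) (v, j) +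
        PE3M ((M.restrict (fun e => e ≠ eb)).contract x c) T (u, false) (v, j) +
        PE3M ((M.restrict (fun e => e ≠ ec)).contract x a) T (u, false) (v, j) +
        PE4y M ea eb ec T (u, false) (v, j)) / 4) := by
  have hS : M.IsStar x a b c ea eb ec := ⟨hendsa, hendsb, hendsc, hab, hac, hbc, hdeg⟩
  have hu : ((u, false) : V × Bool).1 ≠ x := hxu.symm
  have hv : ((v, j) : V × Bool).1 ≠ x := hxv.symm
  have h₁ := hS.sum_odd_div_eq_PE3M_contract hxT hu hv
  have h₂ : (∑ cl : M.E → Bool, if cl ea = cl ec ∧ cl eb ≠ cl ea then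
        pInd ((M.ccGraph cl T).Reachable (u, false) (v, j)) else 0) / 2 ^ (Fintype.card M.E - 2) =
      PE3M ((M.restrict (fun e => e ≠ eb)).contract x c) T (u, false) (v, j) := by
    rw [← hS.rotate.sum_odd_div_eq_PE3M_contract hxT hu hv]
    congr 1
    refine Fintype.sum_congr _ _ fun cl => if_congr ?_ rfl rfl
    cases cl ea <;> cases cl eb <;> cases cl ec <;> decide
  have h₃ := hS.rotate.rotate.sum_odd_div_eq_PE3M_contract hxT hu hv
  have h₄ := hS.sum_allEqual_div_eq_PE4y T (u, false) (v, j)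
  refine ⟨h₁, h₂, h₃, h₄, ?_⟩
  rw [← h₁, ← h₂, ← h₃, ← h₄, PE3M, sum_split_by_odd_one_out ea eb ec,
    ← pow_sub_mul_pow 2 hS.two_le_card]
  ring

/-- Y-operation: for a degree-3 vertex `x ∉ T` with neighbors `a, b, c` and incident
edges `ea = ax`, `eb = bx`, `ec = cx`, conditioning on the color pattern of the star
reduces the E₃ connection probabilities of `G` to those of `G₁ = (G ∖ ax)/bx`,
`G₂ = (G ∖ bx)/cx`, `G₃ = (G ∖ cx)/ax` and of the hypergraph model `G₄` where
`ax, bx, cx` share one uniform color; hence `P_G = (Σᵢ P_{Gᵢ})/4`. -/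
theorem PE3M_Y_operation [DecidableEq V] (M : Multigraph V) (T : Set V)
    (x a b c u v : V) (hxT : x ∉ T) (hxu : x ≠ u) (hxv : x ≠ v)
    (hab : a ≠ b) (hac : a ≠ c) (hbc : b ≠ c)
    (ea eb ec : M.E) (hab' : ea ≠ eb) (hac' : ea ≠ ec) (hbc' : eb ≠ ec)
    (hendsa : M.ends ea = s(a, x)) (hendsb : M.ends eb = s(b, x))
    (hendsc : M.ends ec = s(c, x))
    (hdeg : ∀ e : M.E, x ∈ M.ends e → e = ea ∨ e = eb ∨ e = ec)
    (j : Bool) :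
    ((∑ cl : M.E → Bool,
        if cl eb = cl ec ∧ cl ea ≠ cl eb then
          pInd ((M.ccGraph cl T).Reachable (u, false) (v, j)) else 0) /
      2 ^ (Fintype.card M.E - 2) =
      PE3M ((M.restrict (fun e => e ≠ ea)).contract x b) T (u, false) (v, j)) ∧
    ((∑ cl : M.E → Bool,
        if cl ea = cl ec ∧ cl eb ≠ cl ea then
          pInd ((M.ccGraph cl T).Reachable (u, false) (v, j)) else 0) /
      2 ^ (Fintype.card M.E - 2) =
      PE3M ((M.restrict (fun e => e ≠ eb)).contract x c) T (u, false) (v, j)) ∧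
    ((∑ cl : M.E → Bool,
        if cl ea = cl eb ∧ cl ec ≠ cl ea then
          pInd ((M.ccGraph cl T).Reachable (u, false) (v, j)) else 0) /
      2 ^ (Fintype.card M.E - 2) =
      PE3M ((M.restrict (fun e => e ≠ ec)).contract x a) T (u, false) (v, j)) ∧
    ((∑ cl : M.E → Bool,
        if cl ea = cl eb ∧ cl eb = cl ec then
          pInd ((M.ccGraph cl T).Reachable (u, false) (v, j)) else 0) /
      2 ^ (Fintype.card M.E - 2) =
      PE4y M ea eb ec T (u, false) (v, j)) ∧
    (PE3M M T (u, false) (v, j) =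
      (PE3M ((M.restrict (fun e => e ≠ ea)).contract x b) T (u, false) (v, j) +
        PE3M ((M.restrict (fun e => e ≠ eb)).contract x c) T (u, false) (v, j) +
        PE3M ((M.restrict (fun e => e ≠ ec)).contract x a) T (u, false) (v, j) +
        PE4y M ea eb ec T (u, false) (v, j)) / 4) :=
  PE3M_Y_operation_general M T x a b c u v hxT hxu hxv hab hac hbc ea eb ec hendsa hendsb hendsc
    hdeg j
end
end
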